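/- With f and T_n as above, |E f(T_n)| ≤ 2 for all n ≥ 0, and moreover for n ≥ 2, E f(T_n) = (2/n)(1 − E F(T_{n−1})). -/

import Mathlib

open MeasureTheory

inductive BTree : Type
  | nil : BTree
  | node : BTree → BTree → BTree
deriving DecidableEq

namespace BTree

instance : MeasurableSpace BTree := ⊤

def size : BTree → ℕ
  | nil => 0
  | node l r => size l + size r + 1

def left : BTree → BTree
  | nil => nil
  | node l _ => l

def right : BTree → BTree
  | nil => nil
  | node _ r => r

/-- The number of maximal green nodes (green = outdegree ≤ 1, maximal = no green
strict ancestor): a green root gives the unique maximal green node. -/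
def F : BTree → ℕ
  | nil => 0
  | node l r => if l = nil ∨ r = nil then 1 else F l + F r

/-- The toll function `f(T) = F(T) - F(T_L) - F(T_R)`. -/
def f : BTree → ℤ
  | nil => 0
  | node nil r => 1 - F r
  | node l nil => 1 - F l
  | node _ _ => 0

/-- The list of all subtrees `T_v` rooted at nodes `v` of `T`. -/
def subtrees : BTree → List BTree
  | nil => []
  | node l r => node l r :: (subtrees l ++ subtrees r)

/-- The root is green: the tree is nonempty and has at most one root child. -/
def greenRoot : BTree → Prop
  | nil => False
  | node l r => l = nil ∨ r = nil

instance : DecidablePred greenRoot := fun t => by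
  cases t <;> simp [greenRoot] <;> infer_instance

/-- The random binary search tree with `n` nodes. -/
noncomputable def bst : ℕ → PMF BTree
  | 0 => PMF.pure nil
  | n + 1 =>
    (PMF.uniformOfFintype (Fin (n + 1))).bind fun i =>
      (bst i.val).bind fun l => (bst (n - i.val)).bind fun r => PMF.pure (node l r)
  decreasing_by
    · exact i.isLt
    · omega

/-- `fchain k T` is the number of green chains of length `k` in `T` starting at the root. -/
def fchain : ℕ → BTree → ℕ
  | 0, _ => 0
  | 1, nil => 0
  | 1, node l r => if l = nil ∨ r = nil then 1 else 0
  | _ + 2, nil => 0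
  | k + 2, node l r =>
    if l = nil ∨ r = nil then
      ((subtrees l).map (fun t => fchain (k + 1) t)).sum
        + ((subtrees r).map (fun t => fchain (k + 1) t)).sum
    else 0
  termination_by k _ => k

/-- `Fchain k T` is the total number of green chains of length `k` in `T`. -/
def Fchain (k : ℕ) (T : BTree) : ℕ := ((subtrees T).map (fchain k)).sum

end BTree

/-!
Condition on the root split of `T_n`. A root subtree is empty only when the left subtree has
size `0` or `n - 1`, each with probability `1/n`, and then `f(T_n) = 1 - F(T_{n-1})` with the
other subtree distributed as `T_{n-1}`; for every other split both subtrees are nonempty and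
`f(T_n) = 0`. This gives the formula, and `0 ≤ F(T_{n-1}) ≤ n - 1` bounds it by `2`. All
expectations are finite sums, since `T_n` is supported on the finitely many trees of size `n`.
-/

namespace PMF

open MeasureTheory

variable {α β E : Type*} [NormedAddCommGroup E]

theorem support_bind_finite {p : PMF α} {q : α → PMF β} (hp : p.support.Finite)
    (hq : ∀ a ∈ p.support, (q a).support.Finite) : (p.bind q).support.Finite := by
  rw [support_bind]
  exact hp.biUnion hq

theorem toMeasure_bind_eq_sum [MeasurableSpace β] (p : PMF α) (q : α → PMF β) {s : Finset α}
    (hs : p.support ⊆ s) : (p.bind q).toMeasure = ∑ a ∈ s, p a • (q a).toMeasure := by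
  ext t ht
  rw [toMeasure_bind_apply p q t ht, Measure.coe_finsetSum, Finset.sum_apply,
    tsum_eq_sum fun a ha => by rw [(apply_eq_zero_iff p a).2 fun h => ha (hs h), zero_mul]]
  rfl

variable [MeasurableSpace β] [MeasurableSingletonClass β]

theorem integrable_of_support_finite {p : PMF β} (hp : p.support.Finite) (g : β → E) :
    Integrable g p.toMeasure := by
  rw [← bind_pure p, toMeasure_bind_eq_sum p pure hp.coe_toFinset.superset,
    integrable_finsetSum_measure]
  intro b _
  rw [toMeasure_pure]
  exact (integrable_dirac enorm_lt_top).smul_measure (apply_ne_top p b)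

theorem integral_bind_eq_sum [NormedSpace ℝ E] (p : PMF α) (q : α → PMF β) {s : Finset α}
    (hs : p.support ⊆ s) (hq : ∀ a ∈ s, (q a).support.Finite) (g : β → E) :
    ∫ b, g b ∂(p.bind q).toMeasure
      = ∑ a ∈ s, (p a).toReal • ∫ b, g b ∂(q a).toMeasure := by
  rw [toMeasure_bind_eq_sum p q hs, integral_finsetSum_measure fun a ha =>
    (integrable_of_support_finite (hq a ha) g).smul_measure (apply_ne_top p a)]
  simp only [integral_smul_measure]

theorem integral_eq_sum_of_support_subset [NormedSpace ℝ E] [CompleteSpace E] (p : PMF β)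
    {s : Finset β} (hs : p.support ⊆ s) (g : β → E) :
    ∫ b, g b ∂p.toMeasure = ∑ b ∈ s, (p b).toReal • g b := by
  conv_lhs => rw [← bind_pure p]
  rw [integral_bind_eq_sum p pure hs fun b _ => by simp]
  simp only [toMeasure_pure, integral_dirac]

theorem integral_bind [NormedSpace ℝ E] [CompleteSpace E] [MeasurableSpace α]
    [MeasurableSingletonClass α] {p : PMF α} {q : α → PMF β} (hp : p.support.Finite)
    (hq : ∀ a ∈ p.support, (q a).support.Finite) (g : β → E) :
    ∫ b, g b ∂(p.bind q).toMeasure = ∫ a, ∫ b, g b ∂(q a).toMeasure ∂p.toMeasure := by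
  rw [integral_bind_eq_sum p q hp.coe_toFinset.superset fun a ha => hq a (by simpa using ha),
    integral_eq_sum_of_support_subset p hp.coe_toFinset.superset]

theorem ae_mem_support (p : PMF β) : ∀ᵐ b ∂p.toMeasure, b ∈ p.support := by
  rw [← restrict_toMeasure_support]
  exact ae_restrict_mem p.support_countable.measurableSet

end PMF

namespace BTree

open MeasureTheory

instance : MeasurableSingletonClass BTree := ⟨fun _ => trivial⟩

theorem bst_zero : bst 0 = PMF.pure nil := by
  rw [bst]

theorem bst_succ (n : ℕ) : bst (n + 1) = (PMF.uniformOfFintype (Fin (n + 1))).bind fun i =>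
    (bst i).bind fun l => (bst (n - i)).bind fun r => PMF.pure (node l r) := by
  rw [bst]

theorem support_bst_finite (n : ℕ) : (bst n).support.Finite := by
  induction n using Nat.strong_induction_on with
  | _ n ih =>
    match n with
    | 0 => simp [bst_zero]
    | n + 1 =>
      rw [bst_succ]
      refine PMF.support_bind_finite (Set.toFinite _) fun i _ =>
        PMF.support_bind_finite (ih i (by omega)) fun l _ =>
          PMF.support_bind_finite (ih (n - i) (by omega)) fun r _ => by simp

theorem size_of_mem_support_bst {n : ℕ} {t : BTree} (ht : t ∈ (bst n).support) :
    t.size = n := by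
  induction n using Nat.strong_induction_on generalizing t with
  | _ n ih =>
    match n with
    | 0 =>
      rw [bst_zero, PMF.support_pure, Set.mem_singleton_iff] at ht
      rw [ht, size]
    | n + 1 =>
      simp only [bst_succ, PMF.support_bind, PMF.support_pure, Set.mem_iUnion,
        Set.mem_singleton_iff] at ht
      obtain ⟨i, -, l, hl, r, hr, rfl⟩ := ht
      rw [size, ih i (by omega) hl, ih (n - i) (by omega) hr]
      omega

section Integral

variable {E : Type*} [NormedAddCommGroup E] [NormedSpace ℝ E] [CompleteSpace E]

theorem integral_bst_zero (g : BTree → E) : ∫ t, g t ∂(bst 0).toMeasure = g nil := by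
  rw [bst_zero, PMF.toMeasure_pure, integral_dirac]

theorem integral_bst_succ (n : ℕ) (g : BTree → E) :
    ∫ t, g t ∂(bst (n + 1)).toMeasure = ((n : ℝ) + 1)⁻¹ • ∑ i : Fin (n + 1),
      ∫ l, ∫ r, g (node l r) ∂(bst (n - i)).toMeasure ∂(bst i).toMeasure := by
  have hfin : ∀ {m : ℕ} (l : BTree),
      ((bst m).bind fun r => PMF.pure (node l r)).support.Finite := fun l =>
    PMF.support_bind_finite (support_bst_finite _) fun r _ => by simp
  rw [bst_succ, PMF.integral_bind_eq_sum _ _ (s := Finset.univ) (by simp)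
    fun (i : Fin (n + 1)) _ => PMF.support_bind_finite (support_bst_finite i) fun l _ => hfin l,
    Finset.smul_sum]
  refine Finset.sum_congr rfl fun i _ => ?_
  rw [PMF.integral_bind (support_bst_finite i) fun l _ => hfin l, PMF.uniformOfFintype_apply]
  congr 1
  · simp only [Fintype.card_fin, ENNReal.toReal_inv]
    norm_cast
  · refine integral_congr_ae (.of_forall fun l => ?_)
    dsimp only
    rw [PMF.integral_bind (support_bst_finite _) fun r _ => by simp]
    simp only [PMF.toMeasure_pure, integral_dirac]

end Integral

theorem F_le_size (t : BTree) : F t ≤ t.size := by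
  induction t with
  | nil => simp [F, size]
  | node l r ihl ihr =>
    simp only [F, size]
    split <;> omega

theorem f_node_nil_left (r : BTree) : f (node nil r) = 1 - F r := by
  cases r <;> simp [f]

theorem f_node_nil_right (l : BTree) : f (node l nil) = 1 - F l := by
  cases l <;> simp [f]

theorem f_node_of_ne_nil {l r : BTree} (hl : l ≠ nil) (hr : r ≠ nil) : f (node l r) = 0 := by
  cases l <;> cases r <;> simp_all [f]

theorem integral_F_bst_nonneg (n : ℕ) : 0 ≤ ∫ t, (F t : ℝ) ∂(bst n).toMeasure :=
  integral_nonneg fun _ => Nat.cast_nonneg _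

theorem integral_F_bst_le (n : ℕ) : ∫ t, (F t : ℝ) ∂(bst n).toMeasure ≤ n := by
  have hF : ∀ᵐ t ∂(bst n).toMeasure, (F t : ℝ) ≤ n :=
    (bst n).ae_mem_support.mono fun t ht => by
      exact_mod_cast size_of_mem_support_bst ht ▸ F_le_size t
  simpa using integral_mono_ae (PMF.integrable_of_support_finite (support_bst_finite n) _)
    (integrable_const (n : ℝ)) hF

theorem integral_one_sub_F_bst (n : ℕ) :
    ∫ t, (1 - (F t : ℝ)) ∂(bst n).toMeasure
      = 1 - ∫ t, (F t : ℝ) ∂(bst n).toMeasure := by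
  rw [integral_sub (integrable_const 1) (PMF.integrable_of_support_finite (support_bst_finite n) _)]
  simp

theorem integral_f_node_bst_zero_left (n : ℕ) :
    ∫ l, ∫ r, (f (node l r) : ℝ) ∂(bst n).toMeasure ∂(bst 0).toMeasure
      = 1 - ∫ t, (F t : ℝ) ∂(bst n).toMeasure := by
  simp only [integral_bst_zero, f_node_nil_left, Int.cast_sub, Int.cast_one, Int.cast_natCast]
  exact integral_one_sub_F_bst n

theorem integral_f_node_bst_zero_right (n : ℕ) :
    ∫ l, ∫ r, (f (node l r) : ℝ) ∂(bst 0).toMeasure ∂(bst n).toMeasure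
      = 1 - ∫ t, (F t : ℝ) ∂(bst n).toMeasure := by
  simp only [integral_bst_zero, f_node_nil_right, Int.cast_sub, Int.cast_one, Int.cast_natCast]
  exact integral_one_sub_F_bst n

theorem integral_f_node_bst_succ (i j : ℕ) :
    ∫ l, ∫ r, (f (node l r) : ℝ) ∂(bst (j + 1)).toMeasure ∂(bst (i + 1)).toMeasure
      = 0 := by
  have hne : ∀ {m : ℕ}, ∀ᵐ t ∂(bst (m + 1)).toMeasure, t ≠ nil := fun {m} =>
    (bst (m + 1)).ae_mem_support.mono fun t ht h => by
      have := size_of_mem_support_bst ht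
      simp [h, size] at this
  refine integral_eq_zero_of_ae (hne.mono fun l hl => integral_eq_zero_of_ae ?_)
  filter_upwards [hne] with r hr
  simp [f_node_of_ne_nil hl hr]

theorem integral_f_bst_one : ∫ t, (f t : ℝ) ∂(bst 1).toMeasure = 1 := by
  rw [integral_bst_succ, Fin.sum_univ_one, Fin.val_zero, integral_f_node_bst_zero_left,
    integral_bst_zero]
  simp [F]

theorem integral_f_bst_add_two (m : ℕ) :
    ∫ t, (f t : ℝ) ∂(bst (m + 2)).toMeasure
      = 2 / (m + 2) * (1 - ∫ t, (F t : ℝ) ∂(bst (m + 1)).toMeasure) := by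
  have hmiddle : ∀ i : Fin m, ∫ l, ∫ r, (f (node l r) : ℝ)
      ∂(bst (m + 1 - (i + 1))).toMeasure ∂(bst (i + 1)).toMeasure = 0 := fun i => by
    obtain ⟨j, hj⟩ : ∃ j, m + 1 - (i + 1) = j + 1 := ⟨m - i - 1, by omega⟩
    rw [hj, integral_f_node_bst_succ]
  rw [integral_bst_succ, Fin.sum_univ_succ, Fin.sum_univ_castSucc]
  simp only [Fin.val_zero, Fin.val_succ, Fin.val_castSucc, Fin.val_last, hmiddle,
    Finset.sum_const_zero, Nat.sub_zero, Nat.sub_self, integral_f_node_bst_zero_left,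
    integral_f_node_bst_zero_right, smul_eq_mul, zero_add]
  push_cast
  ring

end BTree

open BTree in
/-- `|E f(T_n)| ≤ 2` for all `n ≥ 0`, and for `n ≥ 2`,
`E f(T_n) = (2/n)(1 − E F(T_{n−1}))`. -/
theorem expectation_f_bound_and_formula :
    (∀ n : ℕ, |∫ t, (f t : ℝ) ∂((bst n).toMeasure)| ≤ 2) ∧
    (∀ n : ℕ, 2 ≤ n →
      ∫ t, (f t : ℝ) ∂((bst n).toMeasure)
        = (2 / n) * (1 - ∫ t, (F t : ℝ) ∂((bst (n - 1)).toMeasure))) := by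
  refine ⟨fun n => ?_, fun n hn => ?_⟩
  · match n with
    | 0 => simp [integral_bst_zero, f]
    | 1 => simp [integral_f_bst_one]
    | m + 2 =>
      have hF₀ := integral_F_bst_nonneg (m + 1)
      have hF₁ := integral_F_bst_le (m + 1)
      rw [integral_f_bst_add_two, abs_le, div_mul_eq_mul_div, le_div_iff₀ (by positivity),
        div_le_iff₀ (by positivity)]
      push_cast at hF₁
      constructor <;> linarith
  · obtain ⟨m, rfl⟩ := Nat.exists_eq_add_of_le' hn
    rw [integral_f_bst_add_two]
    push_cast
    rfl
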